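/- arXiv:2302.13529 — 3 statements merged into one kernel-verified Lean document; each statement's English description precedes it below -/
import Mathlib

section
/- For a fixed seed s, a vertex u ≠ s, and a random sampled graph g derived from G, the expected value E[σ^{→u}(s,g)] equals the decrease in expected spread caused by blocking u: E[σ^{→u}(s,g)] = E({s}, G) − E({s}, G[V\{u}]). -/
/-!
Blocking `u` only removes reachable vertices, and the vertices it removes from the spread of `s`
in a sampled graph are exactly those counted by `σ^{→u}(s, ω)`. So the identity holds pointwise
in `ω` as a difference of counts, and summing against the sample weights gives it in expectation.
-/

open Finset

noncomputable section
open scoped Classical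

variable {V : Type*}

/-- Probability weight of a sampled graph `ω`. -/
def sampleWeight [Fintype V] (p : V → V → ℝ) (ω : V → V → Bool) : ℝ :=
  ∏ u : V, ∏ v : V, if ω u v then p u v else 1 - p u v

/-- Reachability from `s` to `w` in the sampled graph `ω`, through vertices
outside the blocker set `B`. -/
def ReachB (ω : V → V → Bool) (B : Finset V) (s w : V) : Prop :=
  Relation.ReflTransGen (fun a b => ω a b = true ∧ a ∉ B ∧ b ∉ B) s w

/-- Number of vertices reachable from the seed set `S` in the sampled graph `ω`
restricted to `V \ B`. -/
def sigmaB [Fintype V] (ω : V → V → Bool) (B S : Finset V) : ℕ :=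
  (Finset.univ.filter fun w => ∃ s ∈ S, ReachB ω B s w).card

/-- Expected spread of seed set `S` when the blocker set `B` is removed. -/
def spread [Fintype V] (p : V → V → ℝ) (S B : Finset V) : ℝ :=
  ∑ ω : V → V → Bool, sampleWeight p ω * (sigmaB ω B S : ℝ)

/-- `sigmaThrough ω u s` = `σ^{→u}(s, ω)`: the number of vertices `w` reachable
from `s` in the sampled graph `ω` such that every path from `s` to `w`
passes through `u`. -/
def sigmaThrough [Fintype V] (ω : V → V → Bool) (u s : V) : ℕ :=
  (Finset.univ.filter fun w => ReachB ω ∅ s w ∧ ¬ ReachB ω {u} s w).card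

theorem ReachB.mono_blocker {ω : V → V → Bool} {B B' : Finset V} (hB : B ⊆ B') {s w : V}
    (h : ReachB ω B' s w) : ReachB ω B s w :=
  Relation.ReflTransGen.mono (fun _ _ hab => ⟨hab.1, fun ha => hab.2.1 (hB ha),
    fun hb => hab.2.2 (hB hb)⟩) _ _ h

section Fintype

variable [Fintype V]

theorem sigmaB_singleton (ω : V → V → Bool) (B : Finset V) (s : V) :
    sigmaB ω B {s} = (univ.filter fun w => ReachB ω B s w).card := by
  simp only [sigmaB, mem_singleton, exists_eq_left]

theorem filter_reachB_subset_of_subset (ω : V → V → Bool) {B B' : Finset V} (hB : B ⊆ B')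
    (s : V) :
    (univ.filter fun w => ReachB ω B' s w) ⊆ univ.filter fun w => ReachB ω B s w :=
  monotone_filter_right _ fun _ _ => ReachB.mono_blocker hB

theorem sigmaThrough_eq_sigmaB_sub (ω : V → V → Bool) (u s : V) :
    (sigmaThrough ω u s : ℝ) = sigmaB ω ∅ {s} - sigmaB ω {u} {s} := by
  have hsub := filter_reachB_subset_of_subset ω (empty_subset {u}) s
  rw [sigmaB_singleton, sigmaB_singleton, ← Nat.cast_sub (card_le_card hsub),
    ← card_sdiff_of_subset hsub, ← filter_and_not]
  rfl

theorem spread_sub_spread (p : V → V → ℝ) (S B B' : Finset V) :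
    spread p S B - spread p S B' =
      ∑ ω : V → V → Bool, sampleWeight p ω * ((sigmaB ω B S : ℝ) - sigmaB ω B' S) := by
  simp only [spread, ← sum_sub_distrib, mul_sub]

end Fintype

theorem expected_sigma_through_eq_spread_decrease_general [Fintype V]
    (p : V → V → ℝ)
    (s u : V) :
    (∑ ω : V → V → Bool, sampleWeight p ω * (sigmaThrough ω u s : ℝ)) =
      spread p {s} ∅ - spread p {s} {u} := by
  simp only [spread_sub_spread, sigmaThrough_eq_sigmaB_sub]

/-- `E[σ^{→u}(s,g)]` equals the decrease in expected spread caused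
by blocking `u`: `E[σ^{→u}(s,g)] = E({s}, G) - E({s}, G[V \ {u}])`. -/
theorem expected_sigma_through_eq_spread_decrease [Fintype V]
    (p : V → V → ℝ) (hp : ∀ u v, 0 ≤ p u v ∧ p u v ≤ 1)
    (s u : V) (hsu : u ≠ s) :
    (∑ ω : V → V → Bool, sampleWeight p ω * (sigmaThrough ω u s : ℝ)) =
      spread p {s} ∅ - spread p {s} {u} :=
  expected_sigma_through_eq_spread_decrease_general p s u
end
end

section
/- The relation 'u dominates v' on vertices reachable from the source s in a directed graph forms a partial order, and for each fixed reachable vertex v, the set of dominators of v is totally ordered by the dominance relation. -/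
/-!
Dominators in a directed graph `g : V → V → Prop` with a source vertex `s`.
-/

open Finset

noncomputable section
open scoped Classical

variable {V : Type*}

/-- `w` is reachable from `s` in the directed graph `g`. -/
def Reach (g : V → V → Prop) (s w : V) : Prop :=
  Relation.ReflTransGen g s w

/-- `w` is reachable from `s` in `g` by a path avoiding the vertex `u`. -/
def ReachAvoid (g : V → V → Prop) (u s w : V) : Prop :=
  Relation.ReflTransGen (fun a b => g a b ∧ a ≠ u ∧ b ≠ u) s w

/-- `u` dominates `v` (w.r.t. source `s`): `v` is reachable from `s` and every
path from `s` to `v` passes through `u`. -/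
def Dominates (g : V → V → Prop) (s u v : V) : Prop :=
  Reach g s v ∧ (u = v ∨ ¬ ReachAvoid g u s v)

/-- `u` is the immediate dominator of `v`: `u` is a dominator of `v` other than
`v`, and every other dominator of `v` dominates `u`. -/
def IsIdom (g : V → V → Prop) (s u v : V) : Prop :=
  Dominates g s u v ∧ u ≠ v ∧ ∀ w, Dominates g s w v → w ≠ v → Dominates g s w u

/-- `v` lies in the subtree rooted at `u` of the dominator tree of `g` with
source `s` (i.e. `u` is an ancestor of `v`, or `v` itself, along immediate
dominator edges). -/
def InDomSubtree (g : V → V → Prop) (s u v : V) : Prop :=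
  Relation.ReflTransGen (fun a b => IsIdom g s a b) u v

/-!
Everything follows from two "first/last visit" facts about finite paths. Along a path from `s`
to `v`, look at the first visit of `{u, v}`: either `u` is avoided all the way to `v`, or `u` is
reached before `v`, by a path avoiding `v`. This gives antisymmetry at once, and transitivity
after applying it in the subgraph avoiding `u`. For totality, if `u` and `w` both dominate `v`
but neither dominates the other, take the last visit of `{u, w}` on a path from `u` to `v`: the
tail from there avoids both, and prefixing the path from `s` to that vertex which avoids the
other one yields a path from `s` to `v` avoiding `u` or `w`.
-/

namespace Relation.ReflTransGen

variable {α : Type*} {r : α → α → Prop} {p : α → Prop} {a b : α}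

theorem exists_first_mem (h : ReflTransGen r a b) (hb : p b) :
    ∃ m, p m ∧ ReflTransGen (fun x y => r x y ∧ ¬ p x) a m ∧ ReflTransGen r m b := by
  induction h using head_induction_on with
  | refl => exact ⟨b, hb, .refl, .refl⟩
  | @head a c hac hcb ih =>
    by_cases ha : p a
    · exact ⟨a, ha, .refl, head hac hcb⟩
    · obtain ⟨m, hm, hcm, hmb⟩ := ih
      exact ⟨m, hm, head ⟨hac, ha⟩ hcm, hmb⟩

theorem exists_last_mem (h : ReflTransGen r a b) (ha : p a) :
    ∃ m, p m ∧ ReflTransGen (fun x y => r x y ∧ ¬ p y) m b := by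
  induction h with
  | refl => exact ⟨a, ha, .refl⟩
  | @tail b c _ hbc ih =>
    by_cases hc : p c
    · exact ⟨c, hc, .refl⟩
    · obtain ⟨m, hm, hmb⟩ := ih
      exact ⟨m, hm, hmb.tail ⟨hbc, hc⟩⟩

end Relation.ReflTransGen

section Dominance

open Relation

variable {g : V → V → Prop} {p : V → Prop} {s u v w a b : V}

theorem ReachAvoid.reach (h : ReachAvoid g u s v) : Reach g s v :=
  ReflTransGen.mono (fun _ _ e => e.1) _ _ h

theorem reachAvoid_of_sources (h : ReflTransGen (fun x y => g x y ∧ ¬ p x) a b) (hu : p u)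
    (hb : b ≠ u) : ReachAvoid g u a b := by
  induction h with
  | refl => exact .refl
  | @tail c d _ hcd ih =>
    have hc : c ≠ u := fun e => hcd.2 (e ▸ hu)
    exact (ih hc).tail ⟨hcd.1, hc, hb⟩

theorem reachAvoid_of_targets (h : ReflTransGen (fun x y => g x y ∧ ¬ p y) a b) (hu : p u)
    (ha : a ≠ u) : ReachAvoid g u a b := by
  induction h using ReflTransGen.head_induction_on with
  | refl => exact .refl
  | @head c d hcd _ ih =>
    have hd : d ≠ u := fun e => hcd.2 (e ▸ hu)
    exact ReflTransGen.head ⟨hcd.1, ha, hd⟩ (ih hd)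

theorem Reach.reachAvoid_or (h : Reach g s v) (huv : u ≠ v) :
    ReachAvoid g u s v ∨ ReachAvoid g v s u ∧ Reach g u v := by
  obtain ⟨m, hm, hsm, hmv⟩ := h.exists_first_mem (p := fun x => x = u ∨ x = v) (.inr rfl)
  rcases hm with rfl | rfl
  · exact .inr ⟨reachAvoid_of_sources hsm (.inr rfl) huv, hmv⟩
  · exact .inl (reachAvoid_of_sources hsm (.inl rfl) huv.symm)

theorem dominates_self (h : Reach g s u) : Dominates g s u u :=
  ⟨h, .inl rfl⟩

theorem dominates_or_reachAvoid (h : Reach g s v) (u : V) :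
    Dominates g s u v ∨ ReachAvoid g u s v := by
  by_cases hu : ReachAvoid g u s v
  exacts [.inr hu, .inl ⟨h, .inr hu⟩]

namespace Dominates

theorem not_reachAvoid (h : Dominates g s u v) (huv : u ≠ v) : ¬ ReachAvoid g u s v :=
  h.2.resolve_left huv

theorem reachAvoid_and_reach (h : Dominates g s u v) (huv : u ≠ v) :
    ReachAvoid g v s u ∧ Reach g u v :=
  (h.1.reachAvoid_or huv).resolve_left (h.not_reachAvoid huv)

theorem reach_left (h : Dominates g s u v) : Reach g s u := by
  by_cases huv : u = v
  · exact huv ▸ h.1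
  · exact (h.reachAvoid_and_reach huv).1.reach

theorem antisymm (huv : Dominates g s u v) (hvu : Dominates g s v u) : u = v := by
  by_contra hne
  exact hvu.not_reachAvoid (Ne.symm hne) (huv.reachAvoid_and_reach hne).1

theorem trans (huv : Dominates g s u v) (hvw : Dominates g s v w) : Dominates g s u w := by
  by_cases hu : u = v
  · exact hu ▸ hvw
  by_cases hv : v = w
  · exact hv ▸ huv
  refine ⟨hvw.1, .inr fun hsw => ?_⟩
  -- `hsw` is a path in the subgraph avoiding `u`; it must still pass through `v`.
  rcases Reach.reachAvoid_or hsw hv with hsw' | ⟨hsv, -⟩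
  · exact hvw.not_reachAvoid hv (ReflTransGen.mono (fun _ _ e => ⟨e.1.1, e.2⟩) _ _ hsw')
  · exact huv.not_reachAvoid hu hsv.reach

theorem total (hu : Dominates g s u v) (hw : Dominates g s w v) :
    Dominates g s u w ∨ Dominates g s w u := by
  by_cases huw : u = w
  · subst huw
    exact .inl (dominates_self hu.reach_left)
  by_cases huv : u = v
  · exact .inr (huv ▸ hw)
  by_cases hwv : w = v
  · exact .inl (hwv ▸ hu)
  rcases dominates_or_reachAvoid hw.reach_left u with h | hsw
  · exact .inl h
  rcases dominates_or_reachAvoid hu.reach_left w with h | hsu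
  · exact .inr h
  exfalso
  obtain ⟨m, hm, hmv⟩ :=
    (hu.reachAvoid_and_reach huv).2.exists_last_mem (p := fun x => x = u ∨ x = w) (.inl rfl)
  rcases hm with rfl | rfl
  · exact hw.not_reachAvoid hwv (hsu.trans (reachAvoid_of_targets hmv (.inr rfl) huw))
  · exact hu.not_reachAvoid huv (hsw.trans (reachAvoid_of_targets hmv (.inl rfl) (Ne.symm huw)))

end Dominates

end Dominance

/-- on the vertices reachable from the source `s`, the dominance
relation is a partial order (reflexive, antisymmetric, transitive), and for
each fixed reachable vertex `v` the set of dominators of `v` is totally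
ordered by dominance. -/
theorem dominance_partialOrder_and_total_on_dominators (g : V → V → Prop)
    (s : V) :
    (∀ u : V, Reach g s u → Dominates g s u u) ∧
    (∀ u v : V, Dominates g s u v → Dominates g s v u → u = v) ∧
    (∀ u v w : V, Dominates g s u v → Dominates g s v w → Dominates g s u w) ∧
    (∀ v : V, Reach g s v → ∀ u w : V, Dominates g s u v → Dominates g s w v →
      (Dominates g s u w ∨ Dominates g s w u)) :=
  ⟨fun _ => dominates_self, fun _ _ => Dominates.antisymm, fun _ _ _ => Dominates.trans,
    fun _ _ _ _ => Dominates.total⟩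
end
end

section
/- In the dominator tree of a directed graph g with source s, for any two distinct vertices u, v with v in the subtree rooted at u, blocking u disconnects v from s; conversely if v is reachable from s in g and is not in the subtree rooted at u, then v remains reachable from s in g with u removed. -/
/-!
Dominators in a directed graph `g : V → V → Prop` with a source vertex `s`.
-/

open Finset

noncomputable section
open scoped Classical

variable {V : Type*}

/-!
Blocking is transitive, so blocking `u` disconnects everything below `u` along immediate-dominator
edges. Conversely, the strict dominators of a reachable vertex `v` are totally ordered (compare the
last visits of a path `s → v` to two of them), and every strict dominator of `v` has strictly fewer
dominators than `v`. Hence the strict dominator of `v` with the most dominators is its immediate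
dominator, and induction on the number of dominators climbs from `v` up to any strict dominator `u`.
-/

namespace Relation.ReflTransGen

variable {α : Type*} {r : α → α → Prop} {a b x : α}

theorem to_first_or_avoid (h : ReflTransGen r a b) :
    ReflTransGen (fun c d => r c d ∧ c ≠ x) a x ∨
      (ReflTransGen (fun c d => r c d ∧ c ≠ x ∧ d ≠ x) a b ∧ b ≠ x) := by
  induction h with
  | refl =>
    by_cases ha : a = x
    · exact .inl (ha ▸ refl)
    · exact .inr ⟨refl, ha⟩
  | @tail c d _ hcd ih =>
    rcases ih with hx | ⟨p, hc⟩
    · exact .inl hx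
    · by_cases hd : d = x
      · subst hd
        exact .inl ((mono (fun _ _ h => ⟨h.1, h.2.1⟩) _ _ p).tail ⟨hcd, hc⟩)
      · exact .inr ⟨p.tail ⟨hcd, hc, hd⟩, hd⟩

theorem avoid_or_from_last (h : ReflTransGen r a b) :
    (ReflTransGen (fun c d => r c d ∧ c ≠ x ∧ d ≠ x) a b ∧ b ≠ x) ∨
      ReflTransGen (fun c d => r c d ∧ d ≠ x) x b := by
  induction h with
  | refl =>
    by_cases ha : a = x
    · exact .inr (ha ▸ refl)
    · exact .inl ⟨refl, ha⟩
  | @tail c d _ hcd ih =>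
    by_cases hd : d = x
    · exact .inr (hd ▸ refl)
    · rcases ih with ⟨p, hc⟩ | q
      · exact .inl ⟨p.tail ⟨hcd, hc, hd⟩, hd⟩
      · exact .inr (q.tail ⟨hcd, hd⟩)

theorem avoid_of_sources_ne (h : ReflTransGen (fun c d => r c d ∧ c ≠ x) a b) (hb : b ≠ x) :
    ReflTransGen (fun c d => r c d ∧ c ≠ x ∧ d ≠ x) a b := by
  induction h with
  | refl => exact refl
  | tail _ hcd ih => exact (ih hcd.2).tail ⟨hcd.1, hcd.2, hb⟩

theorem avoid_of_targets_ne (h : ReflTransGen (fun c d => r c d ∧ d ≠ x) a b) (ha : a ≠ x) :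
    ReflTransGen (fun c d => r c d ∧ c ≠ x ∧ d ≠ x) a b := by
  induction h using head_induction_on with
  | refl => exact refl
  | head hcd _ ih => exact head ⟨hcd.1, ha, hcd.2⟩ (ih hcd.2)

end Relation.ReflTransGen

section Blocking

open Relation

variable {g : V → V → Prop} {s u v w x y : V}

theorem not_reachAvoid_trans (hwx : ¬ ReachAvoid g w s x) (huw : ¬ ReachAvoid g u s w) :
    ¬ ReachAvoid g u s x := by
  intro p
  rcases p.to_first_or_avoid (x := w) with q | ⟨q, -⟩
  · exact huw (ReflTransGen.mono (fun _ _ h => h.1) _ _ q)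
  · exact hwx (ReflTransGen.mono (fun _ _ h => ⟨h.1.1, h.2⟩) _ _ q)

theorem reach_of_not_reachAvoid (hv : Reach g s v) (hw : ¬ ReachAvoid g w s v) :
    Reach g s w := by
  rcases hv.to_first_or_avoid (x := w) with q | ⟨q, -⟩
  · exact ReflTransGen.mono (fun _ _ h => h.1) _ _ q
  · exact absurd q hw

theorem not_reachAvoid_self (hvs : v ≠ s) : ¬ ReachAvoid g v s v := by
  rintro (_ | ⟨_, hv⟩)
  · exact hvs rfl
  · exact hv.2.2 rfl

theorem reachAvoid_of_not_reachAvoid (hv : Reach g s v) (hw : ¬ ReachAvoid g w s v)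
    (hvw : v ≠ w) : ReachAvoid g v s w := by
  rcases hv.to_first_or_avoid (x := v) with p | ⟨-, hvv⟩
  · rcases p.to_first_or_avoid (x := w) with q | ⟨q, -⟩
    · exact ReflTransGen.avoid_of_sources_ne (ReflTransGen.mono (fun _ _ h => h.1) _ _ q) hvw.symm
    · exact absurd (ReflTransGen.mono (fun _ _ h => ⟨h.1.1, h.2⟩) _ _ q) hw
  · exact absurd rfl hvv

theorem not_reachAvoid_or_not_reachAvoid (hxy : x ≠ y) (hv : Reach g s v)
    (hx : ¬ ReachAvoid g x s v) (hy : ¬ ReachAvoid g y s v) :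
    ¬ ReachAvoid g x s y ∨ ¬ ReachAvoid g y s x := by
  rw [← not_and_or]
  rintro ⟨hxy', hyx'⟩
  rcases hv.avoid_or_from_last (x := x) with ⟨p, -⟩ | p
  · exact hx p
  rcases p.avoid_or_from_last (x := y) with ⟨q, -⟩ | q
  · exact hy (hyx'.trans (ReflTransGen.mono (fun _ _ h => ⟨h.1.1, h.2⟩) _ _ q))
  · exact hx (hxy'.trans (ReflTransGen.avoid_of_targets_ne
      (ReflTransGen.mono (fun _ _ h => ⟨h.1.1, h.1.2⟩) _ _ q) hxy.symm))

theorem not_reachAvoid_of_inDomSubtree (h : InDomSubtree g s u v) (huv : u ≠ v) :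
    ¬ ReachAvoid g u s v := by
  induction h with
  | refl => exact absurd rfl huv
  | @tail b c _ hbc ih =>
    have hbc' : ¬ ReachAvoid g b s c := hbc.1.2.resolve_left hbc.2.1
    by_cases hub : u = b
    · exact hub ▸ hbc'
    · exact not_reachAvoid_trans hbc' (ih hub)

end Blocking

section DominatorTree

variable [Fintype V] {g : V → V → Prop} {s : V}

def blockers (g : V → V → Prop) (s v : V) : Finset V :=
  univ.filter fun x => ¬ ReachAvoid g x s v

theorem blockers_ssubset {v w : V} (hv : Reach g s v) (hw : ¬ ReachAvoid g w s v) (hwv : w ≠ v) :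
    blockers g s w ⊂ blockers g s v := by
  have hvs : v ≠ s := by
    rintro rfl
    exact hw .refl
  refine ssubset_iff_of_subset (fun x hx => ?_) |>.mpr ⟨v, ?_, ?_⟩
  · simp only [blockers, mem_filter, mem_univ, true_and] at hx ⊢
    exact not_reachAvoid_trans hw hx
  · simpa [blockers] using not_reachAvoid_self hvs
  · simpa [blockers] using reachAvoid_of_not_reachAvoid hv hw hwv.symm

theorem exists_isIdom {u v : V} (hv : Reach g s v) (hu : ¬ ReachAvoid g u s v) (huv : u ≠ v) :
    ∃ w, IsIdom g s w v := by
  obtain ⟨w, hwmem, hmax⟩ := (univ.filter fun x => Dominates g s x v ∧ x ≠ v).exists_max_image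
    (fun x => (blockers g s x).card) ⟨u, by simp [Dominates, hv, hu, huv]⟩
  obtain ⟨hwdom, hwv⟩ := (mem_filter.mp hwmem).2
  have hw : ¬ ReachAvoid g w s v := hwdom.2.resolve_left hwv
  refine ⟨w, hwdom, hwv, fun x hxdom hxv => ⟨reach_of_not_reachAvoid hv hw, ?_⟩⟩
  by_cases hxw : x = w
  · exact .inl hxw
  have hx : ¬ ReachAvoid g x s v := hxdom.2.resolve_left hxv
  refine .inr ((not_reachAvoid_or_not_reachAvoid hxw hv hx hw).resolve_right fun hwx => ?_)
  have hlt := card_lt_card (blockers_ssubset (reach_of_not_reachAvoid hv hx) hwx (Ne.symm hxw))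
  exact (hmax x (by simp [hxdom, hxv])).not_gt hlt

theorem inDomSubtree_of_not_reachAvoid {u v : V} (hv : Reach g s v) (hu : ¬ ReachAvoid g u s v)
    (huv : u ≠ v) : InDomSubtree g s u v := by
  obtain ⟨w, hw⟩ := exists_isIdom hv hu huv
  have huw : Dominates g s u w := hw.2.2 u ⟨hv, .inr hu⟩ huv
  by_cases huw' : u = w
  · exact huw' ▸ .single hw
  have := card_lt_card (blockers_ssubset hv (hw.1.2.resolve_left hw.2.1) hw.2.1)
  exact (inDomSubtree_of_not_reachAvoid huw.1 (huw.2.resolve_left huw') huw').tail hw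
termination_by (blockers g s v).card

end DominatorTree

/-- for distinct vertices `u, v`, if `v` lies in the subtree
rooted at `u` of the dominator tree then blocking `u` disconnects `v` from
`s`; conversely, if `v` is reachable from `s` and is not in the subtree rooted
at `u`, then `v` remains reachable from `s` with `u` removed. -/
theorem domSubtree_blocking [Fintype V] (g : V → V → Prop) (s u v : V)
    (huv : u ≠ v) :
    (InDomSubtree g s u v → ¬ ReachAvoid g u s v) ∧
    (Reach g s v → ¬ InDomSubtree g s u v → ReachAvoid g u s v) := by
  refine ⟨fun h => not_reachAvoid_of_inDomSubtree h huv, fun hv hns => ?_⟩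
  by_contra hu
  exact hns (inDomSubtree_of_not_reachAvoid hv hu huv)
end
end
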